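/- Let ABCD be a convex quadrilateral (vertices in cyclic order) whose four vertices determine at most three distinct angle values in (0,π). If some interior angle of the quadrilateral, say at vertex B, is acute with value β, then each of the two angles into which diagonal BD splits β equals β/2. -/

import Mathlib

/-!
The diagonal `BD` splits the quadrilateral into two triangles, so its interior angles sum to `2π`;
as the angle at `B` is acute, some other interior angle is obtuse. The two parts of the angle at
`B` are positive and strictly smaller than `β`, while the obtuse angle exceeds `β`. With at most
three angle values available, the two parts must coincide, and they add up to `β`.
-/

open EuclideanGeometry

noncomputable section

abbrev Pt : Type := EuclideanSpace ℝ (Fin 2)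

/-- The point (x, y) in the Euclidean plane. -/
def pt (x y : ℝ) : Pt := (WithLp.equiv 2 (Fin 2 → ℝ)).symm ![x, y]

/-- The set of distinct angle values in (0, π) determined by a planar point set. -/
def angleSet (P : Set Pt) : Set ℝ :=
  {θ : ℝ | θ ∈ Set.Ioo 0 Real.pi ∧
    ∃ x ∈ P, ∃ y ∈ P, ∃ z ∈ P, x ≠ y ∧ y ≠ z ∧ x ≠ z ∧ ∠ x y z = θ}


/-- A convex quadrilateral with vertices in cyclic order: the open diagonals meet and
no three consecutive vertices are collinear. -/
def ConvexQuad (A B C D : Pt) : Prop :=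
  (∃ x, x ∈ openSegment ℝ A C ∧ x ∈ openSegment ℝ B D) ∧
  ¬ Collinear ℝ ({A, B, C} : Set Pt) ∧ ¬ Collinear ℝ ({B, C, D} : Set Pt) ∧
  ¬ Collinear ℝ ({C, D, A} : Set Pt) ∧ ¬ Collinear ℝ ({D, A, B} : Set Pt)

theorem sbtw_of_mem_openSegment {E : Type*} [AddCommGroup E] [Module ℝ E] {a c x : E}
    (hx : x ∈ openSegment ℝ a c) (hac : a ≠ c) : Sbtw ℝ a x c :=
  ⟨mem_segment_iff_wbtw.1 (openSegment_subset_segment _ _ _ hx),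
    fun hxa => hac (left_mem_openSegment_iff.1 (hxa ▸ hx)),
    fun hxc => hac (right_mem_openSegment_iff.1 (hxc ▸ hx))⟩

theorem angle_add_angle_eq_of_mem_openSegment {V : Type*} [NormedAddCommGroup V]
    [InnerProductSpace ℝ V] {a b c d x : V} (hac : a ≠ c) (hbd : b ≠ d)
    (hxac : x ∈ openSegment ℝ a c) (hxbd : x ∈ openSegment ℝ b d) :
    ∠ a b d + ∠ d b c = ∠ a b c :=
  angle_add_angle_eq_of_sbtw_of_sameRay (sbtw_of_mem_openSegment hxac hac)
    (mem_segment_iff_wbtw.1 (openSegment_subset_segment _ _ _ hxbd)).sameRay_vsub_left hbd.symm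

theorem Set.eq_of_lt_of_ncard_le_three {α : Type*} [LinearOrder α] {S : Set α} (hS : S.Finite)
    (h3 : S.ncard ≤ 3) {a b c d : α} (ha : a ∈ S) (hb : b ∈ S) (hc : c ∈ S) (hd : d ∈ S)
    (hac : a < c) (hbc : b < c) (hcd : c < d) : a = b := by
  by_contra hab
  have h4 : ({a, b, c, d} : Set α).ncard = 4 :=
    Set.ncard_eq_four.2 ⟨a, b, c, d, hab, hac.ne, (hac.trans hcd).ne, hbc.ne, (hbc.trans hcd).ne,
      hcd.ne, rfl⟩
  have hsub : ({a, b, c, d} : Set α) ⊆ S := by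
    rintro t (rfl | rfl | rfl | rfl) <;> assumption
  have := Set.ncard_le_ncard hsub hS
  omega

theorem angleSet_finite {P : Set Pt} (hP : P.Finite) : (angleSet P).Finite := by
  refine ((hP.prod (hP.prod hP)).image fun t : Pt × Pt × Pt => ∠ t.1 t.2.1 t.2.2).subset ?_
  rintro θ ⟨_, x, hx, y, hy, z, hz, _, _, _, rfl⟩
  exact ⟨(x, y, z), ⟨hx, hy, hz⟩, rfl⟩

theorem angle_mem_angleSet {P : Set Pt} {x y z : Pt} (hx : x ∈ P) (hy : y ∈ P) (hz : z ∈ P)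
    (h : ¬ Collinear ℝ ({x, y, z} : Set Pt)) : ∠ x y z ∈ angleSet P :=
  ⟨⟨angle_pos_of_not_collinear h, angle_lt_pi_of_not_collinear h⟩, x, hx, y, hy, z, hz,
    ne₁₂_of_not_collinear h, ne₂₃_of_not_collinear h, ne₁₃_of_not_collinear h, rfl⟩

namespace ConvexQuad

variable {A B C D : Pt}

theorem rotate (hq : ConvexQuad A B C D) : ConvexQuad B C D A := by
  obtain ⟨⟨x, hxAC, hxBD⟩, hABC, hBCD, hCDA, hDAB⟩ := hq
  exact ⟨⟨x, hxBD, openSegment_symm ℝ A C ▸ hxAC⟩, hBCD, hCDA, hDAB, hABC⟩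

theorem angle_add_angle_eq (hq : ConvexQuad A B C D) : ∠ A B D + ∠ D B C = ∠ A B C := by
  obtain ⟨⟨x, hxAC, hxBD⟩, hABC, -, -, hDAB⟩ := hq
  exact angle_add_angle_eq_of_mem_openSegment (ne₁₃_of_not_collinear hABC)
    (ne₁₃_of_not_collinear hDAB).symm hxAC hxBD

theorem angle_add_angle_add_angle_add_angle_eq_two_pi (hq : ConvexQuad A B C D) :
    ∠ D A B + ∠ A B C + ∠ B C D + ∠ C D A = 2 * Real.pi := by
  have hAB := ne₁₂_of_not_collinear hq.2.1
  have hCD := ne₁₂_of_not_collinear hq.2.2.2.1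
  have hsplitB := hq.angle_add_angle_eq
  have hsplitD := hq.rotate.rotate.angle_add_angle_eq
  have hABD := angle_add_angle_add_angle_eq_pi D hAB.symm
  have hCDB := angle_add_angle_add_angle_eq_pi B hCD.symm
  linarith

theorem exists_mem_angleSet_gt_pi_div_two (hq : ConvexQuad A B C D)
    (hacute : ∠ A B C < Real.pi / 2) :
    ∃ θ ∈ angleSet {A, B, C, D}, Real.pi / 2 < θ := by
  by_contra! h
  have hA := h _ (angle_mem_angleSet (by simp) (by simp) (by simp) hq.2.2.2.2)
  have hC := h _ (angle_mem_angleSet (by simp) (by simp) (by simp) hq.2.2.1)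
  have hD := h _ (angle_mem_angleSet (by simp) (by simp) (by simp) hq.2.2.2.1)
  linarith [hq.angle_add_angle_add_angle_add_angle_eq_two_pi]

end ConvexQuad

theorem stmt19 (A B C D : Pt) (β : ℝ) (hq : ConvexQuad A B C D)
    (hcount : (angleSet {A, B, C, D}).ncard ≤ 3)
    (hB : ∠ A B C = β) (hacute : β < Real.pi / 2) :
    ∠ A B D = β / 2 ∧ ∠ D B C = β / 2 := by
  subst hB
  have hsplit := hq.angle_add_angle_eq
  obtain ⟨θ, hθ, hθ_gt⟩ := hq.exists_mem_angleSet_gt_pi_div_two hacute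
  obtain ⟨-, hABC, hBCD, -, hDAB⟩ := hq
  rw [Set.insert_comm, Set.pair_comm] at hDAB
  rw [Set.pair_comm, Set.insert_comm] at hBCD
  have hABD_mem := angle_mem_angleSet (P := {A, B, C, D}) (by simp) (by simp) (by simp) hDAB
  have hDBC_mem := angle_mem_angleSet (P := {A, B, C, D}) (by simp) (by simp) (by simp) hBCD
  have hABC_mem := angle_mem_angleSet (P := {A, B, C, D}) (by simp) (by simp) (by simp) hABC
  have heq := Set.eq_of_lt_of_ncard_le_three (angleSet_finite (Set.toFinite _)) hcount
    hABD_mem hDBC_mem hABC_mem hθ (by linarith [hDBC_mem.1.1]) (by linarith [hABD_mem.1.1])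
    (by linarith)
  constructor <;> linarith

end
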